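/- If a 3-uniform hypergraph H contains a bottle (a pseudo-path of the form v₁v₂...v_k v₂ v₁ with k ≥ 4), then H is not orientable. -/

import Mathlib

def IsTournament {V : Type*} (r : V → V → Prop) : Prop :=
  (∀ v, ¬ r v v) ∧ ∀ u v : V, u ≠ v → (r u v ↔ ¬ r v u)

def Orientable {V : Type*} [DecidableEq V] (H : Set (Finset V)) : Prop :=
  ∃ r : V → V → Prop, IsTournament r ∧
    ∀ e ∈ H, ∃ u v w : V, e = {u, v, w} ∧ r u v ∧ r v w ∧ r w u

/-- `H` contains a bottle `v₀v₁…v_{k-1}v₁v₀` with `k ≥ 4` (repetitions allowed,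
as it is a pseudo-path): hyperedges `{vᵢ,vᵢ₊₁,vᵢ₊₂}` for `0 ≤ i ≤ k-3` together
with `{v_{k-2},v_{k-1},v₁}` and `{v_{k-1},v₁,v₀}`. -/
def HasBottle {V : Type*} [DecidableEq V] (H : Set (Finset V)) (k : ℕ) : Prop :=
  4 ≤ k ∧ ∃ v : ℕ → V,
    (∀ i, i + 2 < k → ({v i, v (i + 1), v (i + 2)} : Finset V) ∈ H) ∧
    ({v (k - 2), v (k - 1), v 1} : Finset V) ∈ H ∧
    ({v (k - 1), v 1, v 0} : Finset V) ∈ H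


/-!
In a tournament a cyclic triangle is determined by the orientation of any one of its pairs:
`a → b` forces `b → c → a`. Along the tight path `v₀ v₁ … v_{k-1}` of a bottle the orientation
`v₀ → v₁` therefore propagates to `v_{k-2} → v_{k-1}`, and the two closing hyperedges
`{v_{k-2}, v_{k-1}, v₁}` and `{v_{k-1}, v₁, v₀}` carry it on to `v_{k-1} → v₁` and `v₁ → v₀`,
a contradiction. The case `v₁ → v₀` is the same argument for the reversed tournament.
-/

theorem Finset.pairwise_ne_of_card_eq_three {V : Type*} [DecidableEq V] {a b c : V}
    (h : ({a, b, c} : Finset V).card = 3) : a ≠ b ∧ a ≠ c ∧ b ≠ c := by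
  grind [Finset.card_le_two, Finset.card_insert_le]

namespace IsTournament

variable {V : Type*} {r : V → V → Prop} {u v w a b c : V}

theorem ne_of_rel (hT : IsTournament r) (h : r u v) : u ≠ v := by
  rintro rfl
  exact hT.1 u h

theorem asymm (hT : IsTournament r) (h : r u v) : ¬ r v u :=
  (hT.2 u v (hT.ne_of_rel h)).1 h

theorem rel_or_rel (hT : IsTournament r) (h : u ≠ v) : r u v ∨ r v u := by
  have := hT.2 u v h
  tauto

protected theorem flip (hT : IsTournament r) : IsTournament (flip r) :=
  ⟨hT.1, fun u v h => hT.2 v u h.symm⟩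

theorem card_eq_three_of_cyclic [DecidableEq V] (hT : IsTournament r)
    (huv : r u v) (hvw : r v w) (hwu : r w u) : ({u, v, w} : Finset V).card = 3 :=
  Finset.card_eq_three.2
    ⟨u, v, w, hT.ne_of_rel huv, (hT.ne_of_rel hwu).symm, hT.ne_of_rel hvw, rfl⟩

theorem rel_of_cyclic [DecidableEq V] (hT : IsTournament r)
    (h : ({a, b, c} : Finset V) = {u, v, w}) (huv : r u v) (hvw : r v w) (hwu : r w u)
    (hab : r a b) : r b c := by
  have hcard := hT.card_eq_three_of_cyclic huv hvw hwu
  rw [← h] at hcard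
  obtain ⟨-, hac, hbc⟩ := Finset.pairwise_ne_of_card_eq_three hcard
  have ha : a ∈ ({u, v, w} : Finset V) := h ▸ by simp
  have hb : b ∈ ({u, v, w} : Finset V) := h ▸ by simp
  have hc : c ∈ ({u, v, w} : Finset V) := h ▸ by simp
  simp only [Finset.mem_insert, Finset.mem_singleton] at ha hb hc
  grind [hT.asymm]

end IsTournament

section Orients

variable {V : Type*} [DecidableEq V] {H : Set (Finset V)} {r : V → V → Prop}

/-- `Orientable H` unfolds to `∃ r, IsTournament r ∧ Orients H r`. -/
def Orients (H : Set (Finset V)) (r : V → V → Prop) : Prop :=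
  ∀ e ∈ H, ∃ u v w : V, e = {u, v, w} ∧ r u v ∧ r v w ∧ r w u

namespace Orients

protected theorem flip (hor : Orients H r) : Orients H (flip r) := by
  intro e he
  obtain ⟨u, v, w, rfl, huv, hvw, hwu⟩ := hor e he
  refine ⟨w, v, u, ?_, hvw, huv, hwu⟩
  ext
  simp only [Finset.mem_insert, Finset.mem_singleton]
  tauto

theorem card_eq_three (hor : Orients H r) (hT : IsTournament r) {e : Finset V} (he : e ∈ H) :
    e.card = 3 := by
  obtain ⟨u, v, w, rfl, huv, hvw, hwu⟩ := hor e he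
  exact hT.card_eq_three_of_cyclic huv hvw hwu

theorem rel_of_mem (hor : Orients H r) (hT : IsTournament r) {a b c : V}
    (he : ({a, b, c} : Finset V) ∈ H) (hab : r a b) : r b c := by
  obtain ⟨u, v, w, h, huv, hvw, hwu⟩ := hor _ he
  exact hT.rel_of_cyclic h huv hvw hwu hab

theorem rel_succ_of_tightPath (hor : Orients H r) (hT : IsTournament r) {k : ℕ} {v : ℕ → V}
    (hpath : ∀ i, i + 2 < k → ({v i, v (i + 1), v (i + 2)} : Finset V) ∈ H)
    (h01 : r (v 0) (v 1)) : ∀ i, i + 1 < k → r (v i) (v (i + 1))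
  | 0, _ => h01
  | i + 1, _ =>
    hor.rel_of_mem hT (hpath i (by omega)) (hor.rel_succ_of_tightPath hT hpath h01 i (by omega))

theorem rel_swap_of_bottle (hor : Orients H r) (hT : IsTournament r) {k : ℕ} (hk : 2 ≤ k)
    {v : ℕ → V} (hpath : ∀ i, i + 2 < k → ({v i, v (i + 1), v (i + 2)} : Finset V) ∈ H)
    (hlast : ({v (k - 2), v (k - 1), v 1} : Finset V) ∈ H)
    (hneck : ({v (k - 1), v 1, v 0} : Finset V) ∈ H)
    (h01 : r (v 0) (v 1)) : r (v 1) (v 0) := by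
  have htail := hor.rel_succ_of_tightPath hT hpath h01 (k - 2) (by omega)
  rw [show k - 2 + 1 = k - 1 by omega] at htail
  exact hor.rel_of_mem hT hneck (hor.rel_of_mem hT hlast htail)

end Orients

end Orients

theorem stmt6_general {V : Type*} [DecidableEq V] (H : Set (Finset V))
    (k : ℕ) (hb : HasBottle H k) :
    ¬ Orientable H := by
  rintro ⟨r, hT, hor⟩
  obtain ⟨hk, v, hpath, hlast, hneck⟩ := hb
  have forced : ∀ {s : V → V → Prop}, IsTournament s → Orients H s →
      s (v 0) (v 1) → s (v 1) (v 0) := fun hs hors =>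
    hors.rel_swap_of_bottle hs (by omega) hpath hlast hneck
  have hne : v 0 ≠ v 1 :=
    (Finset.pairwise_ne_of_card_eq_three (Orients.card_eq_three hor hT hneck)).2.2.symm
  rcases hT.rel_or_rel hne with h01 | h10
  · exact hT.asymm h01 (forced hT hor h01)
  · exact hT.asymm h10 (forced hT.flip (Orients.flip hor) h10)

/-- If a 3-uniform hypergraph contains a bottle then it is not orientable. -/
theorem stmt6 {V : Type*} [DecidableEq V] (H : Set (Finset V))
    (hH : ∀ e ∈ H, e.card = 3) (k : ℕ) (hb : HasBottle H k) :
    ¬ Orientable H :=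
  stmt6_general H k hb
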